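/- Let V be a commutative ring, m ⊆ V an ideal satisfying m·m = m, and R a commutative V-algebra. Let (M_n, φ_n : M_n → M_{n+1})_{n∈ℕ} be a direct system of R-modules, and let (ε_n)_{n∈ℕ}, (δ_n)_{n∈ℕ} be sequences of ideals of V such that: (a) (ε_n) converges to V and ∏_{j≥0} δ_j is a Cauchy product; (b) for every n there exist N(n) ∈ ℕ and an R-linear map ψ_n : R^{N(n)} → M_n with ε_n·coker(ψ_n) = 0; (c) δ_n·coker(φ_n) = 0 for every n. Then the colimit colim_{n∈ℕ} M_n is an almost finitely generated R-module. -/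
import Mathlib

/-- Almost finitely generated `R`-module (w.r.t. an ideal `m ⊆ V`). -/
def IsAlmostFG (V : Type*) [CommRing V] (m : Ideal V)
    (R : Type*) [CommRing R] [Algebra V R]
    (M : Type*) [AddCommGroup M] [Module R M] : Prop :=
  ∀ ε ∈ m, ∃ M₀ : Submodule R M, M₀.FG ∧ ∀ x : M, algebraMap V R ε • x ∈ M₀

/-- A sequence of ideals of `V` converges to `V` (for the uniform structure attached to
the idempotent ideal `m`) if every finitely generated subideal of `m` is eventually
contained in all members of the sequence. -/
def IdealSeqTendstoTop {V : Type*} [CommRing V] (m : Ideal V)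
    (ε : ℕ → Ideal V) : Prop :=
  ∀ m₀ : Ideal V, m₀.FG → m₀ ≤ m → ∃ n₀ : ℕ, ∀ n ≥ n₀, m₀ ≤ ε n

/-- The formal infinite product `∏_{j≥0} δ_j` of ideals of `V` is a Cauchy product if
for every finitely generated ideal `m₀ ⊆ m` there is `n₀` such that
`m₀ ⊆ δ_n·δ_{n+1}·⋯·δ_{n+p}` for all `n ≥ n₀` and all `p ≥ 0`. -/
def IdealSeqCauchyProduct {V : Type*} [CommRing V] (m : Ideal V)
    (δ : ℕ → Ideal V) : Prop :=
  ∀ m₀ : Ideal V, m₀.FG → m₀ ≤ m →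
    ∃ n₀ : ℕ, ∀ n ≥ n₀, ∀ p : ℕ, m₀ ≤ ∏ j ∈ Finset.range (p + 1), δ (n + j)

/-- Any element of an idempotent ideal lies in the product of two finitely generated
subideals. -/
lemma exists_fg_mul_of_idem {V : Type*} [CommRing V] {m : Ideal V} (hm : m * m = m)
    {e : V} (he : e ∈ m) :
    ∃ m₀ m₁ : Ideal V, m₀.FG ∧ m₁.FG ∧ m₀ ≤ m ∧ m₁ ≤ m ∧ e ∈ m₀ * m₁ := by
  rw [← hm] at he
  refine Submodule.mul_induction_on he ?_ ?_
  · intro a ha b hb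
    exact ⟨Ideal.span {a}, Ideal.span {b}, Submodule.fg_span_singleton a, Submodule.fg_span_singleton b,
      (Ideal.span_le).2 (by simpa using ha), (Ideal.span_le).2 (by simpa using hb),
      Ideal.mul_mem_mul (Ideal.subset_span rfl) (Ideal.subset_span rfl)⟩
  · rintro x y ⟨a₀, a₁, ha₀, ha₁, ha₀m, ha₁m, hx⟩ ⟨b₀, b₁, hb₀, hb₁, hb₀m, hb₁m, hy⟩
    refine ⟨a₀ ⊔ b₀, a₁ ⊔ b₁, Submodule.FG.sup ha₀ hb₀, Submodule.FG.sup ha₁ hb₁, sup_le ha₀m hb₀m, sup_le ha₁m hb₁m, ?_⟩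
    exact Submodule.add_mem _ (Ideal.mul_mono le_sup_left le_sup_left hx)
      (Ideal.mul_mono le_sup_right le_sup_right hy)

/-- Let `(M_n, φ_n)` be a direct system of `R`-modules, and let
`(ε_n)`, `(δ_n)` be sequences of ideals of `V` such that `(ε_n)` converges to `V` and
`∏ δ_j` is a Cauchy product, each `M_n` admits a map from a finite free module whose
cokernel is killed by `ε_n`, and `δ_n·coker(φ_n) = 0` for all `n`.  Then
`colim_n M_n` is an almost finitely generated `R`-module. -/
theorem directLimit_isAlmostFG
    (V : Type*) [CommRing V] (m : Ideal V) (hm : m * m = m)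
    (R : Type*) [CommRing R] [Algebra V R]
    (M : ℕ → Type*) [∀ n, AddCommGroup (M n)] [∀ n, Module R (M n)]
    (f : ∀ i j : ℕ, i ≤ j → M i →ₗ[R] M j)
    [DirectedSystem M fun i j h => f i j h]
    (ε δ : ℕ → Ideal V)
    (hε : IdealSeqTendstoTop m ε) (hδ : IdealSeqCauchyProduct m δ)
    (hgen : ∀ n : ℕ, ∃ (N : ℕ) (ψ : (Fin N → R) →ₗ[R] M n),
      ∀ a ∈ ε n, ∀ x : M n, algebraMap V R a • x ∈ LinearMap.range ψ)
    (hcoker : ∀ n : ℕ, ∀ a ∈ δ n, ∀ x : M (n + 1),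
      algebraMap V R a • x ∈ LinearMap.range (f n (n + 1) (Nat.le_succ n))) :
    IsAlmostFG V m R (Module.DirectLimit M f) := by
  -- Key lemma: an element of `δ_n ⋯ δ_{n+p}` pushes `M (n+p+1)` into the image of `M n`.
  have key : ∀ (n p : ℕ), ∀ b ∈ ∏ j ∈ Finset.range (p + 1), δ (n + j),
      ∀ y : M (n + p + 1),
        algebraMap V R b • y ∈ LinearMap.range (f n (n + p + 1) (by omega)) := by
    intro n p
    induction p with
    | zero =>
      intro b hb y
      rw [Finset.prod_range_one] at hb
      exact hcoker n b hb y
    | succ p ih =>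
      intro b hb y
      rw [Finset.prod_range_succ] at hb
      refine Submodule.mul_induction_on hb ?_ ?_
      · intro c hc d hd
        obtain ⟨z, hz⟩ := hcoker (n + p + 1) d hd y
        obtain ⟨w, hw⟩ := ih c hc z
        refine ⟨w, ?_⟩
        show f n ((n + p + 1) + 1) (by omega) w
            = algebraMap V R (c * d) • (y : M ((n + p + 1) + 1))
        have hs := (f (n + p + 1) (n + p + 1 + 1) (Nat.le_succ _)).map_smul
          (algebraMap V R c) z
        rw [map_mul, mul_smul, ← hz, ← hs, ← hw]
        exact (DirectedSystem.map_map (f := fun i j h => ⇑(f i j h))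
          (by omega : n ≤ n + p + 1) (Nat.le_succ _) w).symm
      · intro x₁ x₂ h₁ h₂
        rw [map_add, add_smul]
        exact Submodule.add_mem _ h₁ h₂
  intro e he
  obtain ⟨m₀, m₁, hfg₀, hfg₁, hm₀, hm₁, hmem⟩ := exists_fg_mul_of_idem hm he
  obtain ⟨n₀, hn₀⟩ := hε m₀ hfg₀ hm₀
  obtain ⟨n₁, hn₁⟩ := hδ m₁ hfg₁ hm₁
  set n := max n₀ n₁ with hn
  obtain ⟨N, ψ, hψ⟩ := hgen n
  refine ⟨(LinearMap.range ψ).map (Module.DirectLimit.of R ℕ M f n), ?_, ?_⟩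
  · refine Submodule.FG.map _ ?_
    rw [LinearMap.range_eq_map]
    exact (Module.Finite.fg_top (R := R) (M := Fin N → R)).map ψ
  · intro x
    obtain ⟨k, y, rfl⟩ := Module.DirectLimit.exists_of x
    obtain ⟨p, hkp⟩ : ∃ p, k ≤ n + p + 1 := ⟨k, by omega⟩
    rw [← Module.DirectLimit.of_f (hij := hkp) (x := y)]
    set y' : M (n + p + 1) := f k (n + p + 1) hkp y
    refine Submodule.mul_induction_on hmem ?_ ?_
    · intro a ha b hb
      obtain ⟨z, hz⟩ := key n p b (hn₁ n (le_max_right _ _) p hb) y'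
      refine ⟨algebraMap V R a • z, hψ a (hn₀ n (le_max_left _ _) ha) z, ?_⟩
      rw [map_mul, mul_smul, ← LinearMap.map_smul, ← hz,
        Module.DirectLimit.of_f, ← LinearMap.map_smul]
    · intro x₁ x₂ h₁ h₂
      rw [map_add, add_smul]
      exact Submodule.add_mem _ h₁ h₂
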